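/- Let I be a countable type and let p, q : I → ℝ be functions such that for every s > 1 both series ∑_{i∈I} exp(−s·p(i)) and ∑_{i∈I} exp(−s·q(i)) converge (i.e. each has critical exponent at most 1). Then for every s > 1/2 the series ∑_{i∈I} exp(−s·(p(i) + q(i))) converges; hence the critical exponent of ∑_{i∈I} exp(−s·(p(i)+q(i))) is at most 1/2. -/
import Mathlib


/-- Cauchy–Schwarz step for the Bishop–Steiger bound: if both `∑ exp(−s p i)` and
`∑ exp(−s q i)` converge for every `s > 1`, then `∑ exp(−s (p i + q i))` converges for every
`s > 1/2`; hence the critical exponent of the combined series is at most `1/2`. -/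
theorem summable_exp_sum_of_critExp_le_one {I : Type*} [Countable I] (p q : I → ℝ)
    (hp : ∀ s : ℝ, 1 < s → Summable fun i => Real.exp (-s * p i))
    (hq : ∀ s : ℝ, 1 < s → Summable fun i => Real.exp (-s * q i)) :
    (∀ s : ℝ, 1 / 2 < s → Summable fun i => Real.exp (-s * (p i + q i))) ∧
    sInf {s : ℝ | 0 < s ∧ Summable fun i => Real.exp (-s * (p i + q i))} ≤ 1 / 2 := by
  have key : ∀ s : ℝ, 1 / 2 < s → Summable fun i => Real.exp (-s * (p i + q i)) := by
    intro s hs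
    have h2s : (1 : ℝ) < 2 * s := by linarith
    have hP := hp (2 * s) h2s
    have hQ := hq (2 * s) h2s
    have hsum := (hP.add hQ).mul_left (1 / 2)
    refine hsum.of_nonneg_of_le (fun i => (Real.exp_pos _).le) (fun i => ?_)
    have h1 : Real.exp (-s * (p i + q i)) = Real.exp (-s * p i) * Real.exp (-s * q i) := by
      rw [← Real.exp_add]; ring_nf
    have h2 : Real.exp (-(2 * s) * p i) = Real.exp (-s * p i) ^ 2 := by
      rw [← Real.exp_nat_mul]; ring_nf
    have h3 : Real.exp (-(2 * s) * q i) = Real.exp (-s * q i) ^ 2 := by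
      rw [← Real.exp_nat_mul]; ring_nf
    rw [h1, h2, h3]
    nlinarith [sq_nonneg (Real.exp (-s * p i) - Real.exp (-s * q i))]
  refine ⟨key, ?_⟩
  have hbdd : BddBelow {s : ℝ | 0 < s ∧ Summable fun i => Real.exp (-s * (p i + q i))} :=
    ⟨0, fun s hs => hs.1.le⟩
  have : ∀ ε > (0:ℝ), sInf {s : ℝ | 0 < s ∧ Summable fun i => Real.exp (-s * (p i + q i))}
      ≤ 1 / 2 + ε := fun ε hε =>
    csInf_le hbdd ⟨by linarith, key _ (by linarith)⟩
  linarith [le_of_forall_pos_le_add this]
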